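/- arXiv:2008.12287 — 2 statements merged into one kernel-verified Lean document; each statement's English description precedes it below -/
import Mathlib

section
/- Let A be a unital C*-algebra and let (x_k) be a sequence of self-adjoint elements in unital C*-algebras A_k with uniformly bounded norms, such that for every polynomial f, ‖f(x_k)‖ → ‖f(x)‖ for a self-adjoint element x in A. Then σ(x_k) → σ(x) in the Hausdorff metric on nonempty compact subsets of ℝ. -/
open Filter

lemma aux_est {D : Type*} [CStarAlgebra D] [Nontrivial D] {a : D} (ha : IsSelfAdjoint a)
    {g h : ℝ → ℝ} (hg : Continuous g) (hh : Continuous h) {M ε : ℝ}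
    (hσ : spectrum ℝ a ⊆ Set.Icc (-M) M) (hgh : ∀ t ∈ Set.Icc (-M) M, |g t - h t| ≤ ε)
    (hε : 0 ≤ ε) :
    |‖cfc g a‖ - ‖cfc h a‖| ≤ ε := by
  have h1 : ‖cfc g a - cfc h a‖ ≤ ε := by
    rw [← cfc_sub g h a]
    apply norm_cfc_le hε
    intro t ht
    simpa [Real.norm_eq_abs] using hgh t (hσ ht)
  exact (abs_norm_sub_norm_le _ _).trans h1

/-- Let `x_k` be a uniformly norm-bounded sequence of self-adjoint elements
of unital C*-algebras `A k`, and `x` a self-adjoint element of a unital C*-algebra `A`.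
If `‖f(x_k)‖ → ‖f(x)‖` for every polynomial `f`, then the spectra `σ(x_k)` converge to
`σ(x)` in the Hausdorff metric (on nonempty compact subsets of `ℝ`). -/
theorem stmt7 {A : ℕ → Type*}
    [∀ k, NormedRing (A k)] [∀ k, StarRing (A k)] [∀ k, CStarRing (A k)]
    [∀ k, NormedAlgebra ℂ (A k)] [∀ k, StarModule ℂ (A k)] [∀ k, CompleteSpace (A k)]
    [∀ k, Nontrivial (A k)]
    {B : Type*} [NormedRing B] [StarRing B] [CStarRing B]
    [NormedAlgebra ℂ B] [StarModule ℂ B] [CompleteSpace B] [Nontrivial B]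
    (x : ∀ k, A k) (hxsa : ∀ k, IsSelfAdjoint (x k))
    (hbdd : ∃ C, ∀ k, ‖x k‖ ≤ C)
    (x₀ : B) (hx₀ : IsSelfAdjoint x₀)
    (hpoly : ∀ f : Polynomial ℂ,
      Tendsto (fun k => ‖Polynomial.aeval (x k) f‖) atTop (nhds ‖Polynomial.aeval x₀ f‖)) :
    Tendsto (fun k => Metric.hausdorffDist (spectrum ℝ (x k)) (spectrum ℝ x₀))
      atTop (nhds 0) := by
  letI : ∀ k, CStarAlgebra (A k) := fun k => { }
  letI : CStarAlgebra B := { }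
  obtain ⟨C, hC⟩ := hbdd
  set M : ℝ := max C ‖x₀‖ with hMdef
  have hσk : ∀ k, spectrum ℝ (x k) ⊆ Set.Icc (-M) M := by
    intro k t ht
    have h1 : ‖t‖ ≤ ‖x k‖ := spectrum.norm_le_norm_of_mem ht
    rw [Real.norm_eq_abs, abs_le] at h1
    have h2 : ‖x k‖ ≤ M := (hC k).trans (le_max_left _ _)
    exact ⟨by linarith [h1.1], by linarith [h1.2]⟩
  have hσ₀ : spectrum ℝ x₀ ⊆ Set.Icc (-M) M := by
    intro t ht
    have h1 : ‖t‖ ≤ ‖x₀‖ := spectrum.norm_le_norm_of_mem ht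
    rw [Real.norm_eq_abs, abs_le] at h1
    have h2 : ‖x₀‖ ≤ M := le_max_right _ _
    exact ⟨by linarith [h1.1], by linarith [h1.2]⟩
  -- key: convergence for all continuous functions
  have key : ∀ g : ℝ → ℝ, Continuous g →
      Tendsto (fun k => ‖cfc g (x k)‖) atTop (nhds ‖cfc g x₀‖) := by
    intro g hg
    rw [Metric.tendsto_atTop]
    intro ε hε
    obtain ⟨q, hq⟩ := exists_polynomial_near_of_continuousOn (-M) M g
      hg.continuousOn (ε/3) (by linarith)
    have hq' : Tendsto (fun k => ‖cfc q.eval (x k)‖) atTop (nhds ‖cfc q.eval x₀‖) := by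
      have h1 : ∀ k, cfc q.eval (x k) = Polynomial.aeval (x k) q :=
        fun k => cfc_polynomial q (x k)
      have h2 : cfc q.eval x₀ = Polynomial.aeval x₀ q := cfc_polynomial q x₀
      have h3 := hpoly (q.map (algebraMap ℝ ℂ))
      simp only [Polynomial.aeval_map_algebraMap] at h3
      simpa [h1, h2] using h3
    obtain ⟨N, hN⟩ := Metric.tendsto_atTop.mp hq' (ε/3) (by linarith)
    refine ⟨N, fun k hk => ?_⟩
    have hqc : Continuous fun t => q.eval t := q.continuous
    have e1 : |‖cfc g (x k)‖ - ‖cfc q.eval (x k)‖| ≤ ε/3 :=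
      aux_est (hxsa k) hg hqc (hσk k)
        (fun t ht => by have := hq t ht; rw [abs_sub_comm]; linarith [abs_nonneg (q.eval t - g t)])
        (by linarith)
    have e2 : |‖cfc g x₀‖ - ‖cfc q.eval x₀‖| ≤ ε/3 :=
      aux_est hx₀ hg hqc hσ₀
        (fun t ht => by have := hq t ht; rw [abs_sub_comm]; linarith [abs_nonneg (q.eval t - g t)])
        (by linarith)
    have e3 := hN k hk
    rw [Real.dist_eq] at e3 ⊢
    have t1 : |‖cfc g (x k)‖ - ‖cfc g x₀‖| ≤
        |‖cfc g (x k)‖ - ‖cfc q.eval (x k)‖| + |‖cfc q.eval (x k)‖ - ‖cfc g x₀‖| :=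
      abs_sub_le _ _ _
    have t2 : |‖cfc q.eval (x k)‖ - ‖cfc g x₀‖| ≤
        |‖cfc q.eval (x k)‖ - ‖cfc q.eval x₀‖| + |‖cfc q.eval x₀‖ - ‖cfc g x₀‖| :=
      abs_sub_le _ _ _
    have e2' : |‖cfc q.eval x₀‖ - ‖cfc g x₀‖| ≤ ε/3 := by rw [abs_sub_comm]; exact e2
    linarith
  -- main argument
  rw [Metric.tendsto_atTop]
  intro ε hε
  have hS₀ne : (spectrum ℝ x₀).Nonempty := hx₀.spectrum_nonempty
  -- Part (a): eventually σ(x k) is within ε/2 of σ(x₀)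
  set g : ℝ → ℝ := fun t => min (Metric.infDist t (spectrum ℝ x₀)) ε with hgdef
  have hgcont : Continuous g := (Metric.continuous_infDist_pt _).min continuous_const
  have hg0 : ‖cfc g x₀‖ = 0 := by
    refine le_antisymm (norm_cfc_le le_rfl fun t ht => ?_) (norm_nonneg _)
    simp [hgdef, Metric.infDist_zero_of_mem ht, min_eq_left hε.le]
  have evA : ∀ᶠ k in atTop, ∀ lam ∈ spectrum ℝ (x k), ∃ y ∈ spectrum ℝ x₀,
      dist lam y ≤ ε/2 := by
    have h1 : ∀ᶠ k in atTop, ‖cfc g (x k)‖ < ε/2 := by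
      have := key g hgcont
      rw [hg0] at this
      exact this.eventually (eventually_lt_nhds (show (0:ℝ) < ε/2 by linarith))
    filter_upwards [h1] with k hk lam hlam
    have h2 : ‖g lam‖ ≤ ‖cfc g (x k)‖ := norm_apply_le_norm_cfc g (x k) hlam
    have hg_nonneg : 0 ≤ g lam := le_min Metric.infDist_nonneg hε.le
    rw [Real.norm_eq_abs, abs_of_nonneg hg_nonneg] at h2
    have h3 : Metric.infDist lam (spectrum ℝ x₀) < ε/2 := by
      rcases min_lt_iff.mp (lt_of_le_of_lt h2 hk) with h | h
      · exact h
      · linarith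
    obtain ⟨y, hy, hdy⟩ := (Metric.infDist_lt_iff hS₀ne).mp h3
    exact ⟨y, hy, hdy.le.trans le_rfl⟩
  -- Part (b): eventually σ(x₀) is within ε/2 of σ(x k)
  obtain ⟨T, hTsub, hTfin, hTcov⟩ :=
    (spectrum.isCompact (a := x₀) (𝕜 := ℝ)).finite_cover_balls
      (show (0:ℝ) < ε/4 by linarith)
  have evB : ∀ᶠ k in atTop, ∀ μ ∈ T, ∃ lam ∈ spectrum ℝ (x k), dist lam μ < ε/4 := by
    rw [eventually_all_finite hTfin]
    intro μ hμ
    set f : ℝ → ℝ := fun t => max (ε/4 - dist t μ) 0 with hfdef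
    have hfcont : Continuous f :=
      ((continuous_const.sub (continuous_id.dist continuous_const)).max continuous_const)
    have hf_lb : ε/4 ≤ ‖cfc f x₀‖ := by
      have hfμ : f μ = ε/4 := by
        simp only [hfdef, dist_self, sub_zero]
        exact max_eq_left (by linarith)
      have h0 := norm_apply_le_norm_cfc f x₀ (hTsub hμ)
      rwa [hfμ, Real.norm_eq_abs, abs_of_nonneg (by linarith)] at h0
    have h1 : ∀ᶠ k in atTop, ε/8 < ‖cfc f (x k)‖ :=
      (key f hfcont).eventually (eventually_gt_nhds (by linarith))
    filter_upwards [h1] with k hk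
    by_contra hcon
    push_neg at hcon
    have h2 : ‖cfc f (x k)‖ ≤ ε/8 := by
      apply norm_cfc_le (by linarith)
      intro t ht
      have h3 : ε/4 ≤ dist t μ := hcon t ht
      have : f t = 0 := by simp [hfdef, max_eq_right (show ε/4 - dist t μ ≤ 0 by linarith)]
      simp [this]; linarith
    linarith
  -- Combine
  obtain ⟨N, hN⟩ := (evA.and evB).exists_forall_of_atTop
  refine ⟨N, fun k hk => ?_⟩
  obtain ⟨hA, hB⟩ := hN k hk
  have hd : Metric.hausdorffDist (spectrum ℝ (x k)) (spectrum ℝ x₀) ≤ ε/2 := by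
    apply Metric.hausdorffDist_le_of_mem_dist (by linarith)
    · exact hA
    · intro y hy
      obtain ⟨μ, hμT, hyμ⟩ := Set.mem_iUnion₂.mp (hTcov hy)
      obtain ⟨lam, hlamσ, hlamμ⟩ := hB μ hμT
      refine ⟨lam, hlamσ, ?_⟩
      have ht := dist_triangle y μ lam
      rw [Metric.mem_ball] at hyμ
      rw [dist_comm lam μ] at hlamμ
      linarith
  rw [Real.dist_eq, sub_zero, abs_of_nonneg Metric.hausdorffDist_nonneg]
  linarith
end

section
/- Let M be a tracial von Neumann algebra with trace τ, and suppose that h satisfies: (a) h(N₁ ∨ N₂ : M) ≤ h(N₁ : M) + h(N₂ : M) whenever N₁, N₂ ≤ M are diffuse subalgebras with N₁ ∩ N₂ diffuse, and (b) h(Q : M) = 0 for every diffuse amenable Q ≤ M. Define P ≤ M to be Pinsker if h(P : M) ≤ 0 and h(Q : M) > 0 for all P < Q ≤ M. If every Pinsker algebra in M is amenable, then every diffuse amenable subalgebra Q ≤ M is contained in a unique maximal amenable subalgebra of M. -/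
/-- (Proposition 2.8, stated axiomatically via the properties of the
1-bounded entropy `h`.)  Let `A` be the lattice of (unital) von Neumann subalgebras of
a tracial von Neumann algebra `(M, τ)` (meet = intersection, join = generated algebra),
with predicates `diffuse` and `amenable`, and let `h(· : M)` take values in
`[-∞, ∞]`.  Assume:
(mono) monotonicity of `h`; diffuseness passes to larger subalgebras;
(a) subadditivity: `h(N₁ ∨ N₂ : M) ≤ h(N₁:M) + h(N₂:M)` when `N₁, N₂, N₁ ∩ N₂` diffuse;
(b) `h(Q : M) = 0` for every diffuse amenable `Q`;
(Pinsker) `P` is Pinsker iff `h(P:M) ≤ 0` and `h(Q:M) > 0` for all `P < Q`;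
(envelope) every diffuse `Q` with `h(Q:M) ≤ 0` lies in a unique Pinsker algebra.
If every Pinsker algebra is amenable, then every diffuse amenable `Q` is contained in a
unique maximal amenable subalgebra. -/
theorem stmt13 {A : Type*} [Lattice A]
    (diffuse amenable : A → Prop) (h : A → EReal)
    (hdiff_mono : ∀ {N N' : A}, diffuse N → N ≤ N' → diffuse N')
    (hmono : ∀ {N N' : A}, N ≤ N' → h N ≤ h N')
    (hsub : ∀ {N₁ N₂ : A}, diffuse N₁ → diffuse N₂ → diffuse (N₁ ⊓ N₂) →
      h (N₁ ⊔ N₂) ≤ h N₁ + h N₂)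
    (hamen : ∀ {Q : A}, diffuse Q → amenable Q → h Q = 0)
    (Pinsker : A → Prop)
    (hPinsker_def : ∀ P, Pinsker P ↔ h P ≤ 0 ∧ ∀ Q, P ≤ Q → P ≠ Q → 0 < h Q)
    (henv : ∀ Q, diffuse Q → h Q ≤ 0 → ∃! P, Pinsker P ∧ Q ≤ P)
    (hPinsker_amen : ∀ P, Pinsker P → amenable P)
    (Q : A) (hQd : diffuse Q) (hQa : amenable Q) :
    ∃! P, (amenable P ∧ ∀ N, amenable N → P ≤ N → N = P) ∧ Q ≤ P := by
  obtain ⟨P, ⟨hPp, hQP⟩, hPuniq⟩ := henv Q hQd (le_of_eq (hamen hQd hQa))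
  have hPd : diffuse P := hdiff_mono hQd hQP
  refine ⟨P, ⟨⟨hPinsker_amen P hPp, ?_⟩, hQP⟩, ?_⟩
  · intro N hNa hPN
    by_contra hne
    have : (0 : EReal) < h N := ((hPinsker_def P).mp hPp).2 N hPN (fun e => hne e.symm)
    rw [hamen (hdiff_mono hPd hPN) hNa] at this
    exact lt_irrefl _ this
  · rintro P' ⟨⟨hP'a, hP'max⟩, hQP'⟩
    have hP'd : diffuse P' := hdiff_mono hQd hQP'
    obtain ⟨P'', ⟨hP''p, hP'P''⟩, _⟩ := henv P' hP'd (le_of_eq (hamen hP'd hP'a))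
    have : P'' = P' := hP'max P'' (hPinsker_amen P'' hP''p) hP'P''
    exact hPuniq P' ⟨this ▸ hP''p, hQP'⟩
end
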